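/- arXiv:1805.00767 — 2 statements merged into one kernel-verified Lean document; each statement's English description precedes it below -/
import Mathlib

section
/- Let G'' be the group with generators a, b, c, d and relators ⁅a,c⁆, ⁅a,d⁆, ⁅b,c⁆, ⁅b,d⁆ and ⁅a,b⁆·⁅c,d⁆. Then G'' is isomorphic to the quotient of H(ℤ) × H(ℤ) by the diagonal copy Δ = {(Z^k, Z^k) : k ∈ ℤ} of the common center, via the map sending a ↦ (A,1), b ↦ (B,1), c ↦ (1,A), d ↦ (1,B). -/
/-- The Heisenberg group over a commutative ring `R`: `3 × 3` upper triangular matrices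
over `R` with all diagonal entries equal to `1`. -/
def Heisenberg (R : Type) [CommRing R] : Type :=
  {M : Matrix (Fin 3) (Fin 3) R //
    M 0 0 = 1 ∧ M 1 1 = 1 ∧ M 2 2 = 1 ∧ M 1 0 = 0 ∧ M 2 0 = 0 ∧ M 2 1 = 0}

namespace Heisenberg

variable {R : Type} [CommRing R]

instance : Mul (Heisenberg R) :=
  ⟨fun M N => ⟨M.1 * N.1, by
    obtain ⟨m1, m2, m3, m4, m5, m6⟩ := M.2
    obtain ⟨n1, n2, n3, n4, n5, n6⟩ := N.2
    refine ⟨?_, ?_, ?_, ?_, ?_, ?_⟩ <;>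
      simp [Matrix.mul_apply, Fin.sum_univ_three, m1, m2, m3, m4, m5, m6,
        n1, n2, n3, n4, n5, n6]⟩⟩

instance : One (Heisenberg R) := ⟨⟨1, by simp⟩⟩

instance : Inv (Heisenberg R) :=
  ⟨fun M => ⟨!![1, -M.1 0 1, M.1 0 1 * M.1 1 2 - M.1 0 2; 0, 1, -M.1 1 2; 0, 0, 1],
    ⟨rfl, rfl, rfl, rfl, rfl, rfl⟩⟩⟩

theorem mul_val (M N : Heisenberg R) : (M * N).1 = M.1 * N.1 := rfl
theorem one_val : (1 : Heisenberg R).1 = 1 := rfl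
theorem inv_val (M : Heisenberg R) :
    (M⁻¹).1 = !![1, -M.1 0 1, M.1 0 1 * M.1 1 2 - M.1 0 2; 0, 1, -M.1 1 2; 0, 0, 1] := rfl

instance : Group (Heisenberg R) where
  mul_assoc M N P := Subtype.ext (by rw [mul_val, mul_val, mul_val, mul_val, mul_assoc])
  one_mul M := Subtype.ext (by rw [mul_val, one_val, one_mul])
  mul_one M := Subtype.ext (by rw [mul_val, one_val, mul_one])
  inv_mul_cancel M := by
    obtain ⟨m1, m2, m3, m4, m5, m6⟩ := M.2
    apply Subtype.ext
    rw [mul_val, inv_val, one_val]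
    ext i j
    fin_cases i <;> fin_cases j <;>
      simp [Matrix.mul_apply, Fin.sum_univ_three, Matrix.one_apply,
        m1, m2, m3, m4, m5, m6] <;>
      ring

/-- The elementary unitriangular matrix with a `1` in position `(1,2)`. -/
def A : Heisenberg R := ⟨!![1, 1, 0; 0, 1, 0; 0, 0, 1], ⟨rfl, rfl, rfl, rfl, rfl, rfl⟩⟩

/-- The elementary unitriangular matrix with a `1` in position `(2,3)`. -/
def B : Heisenberg R := ⟨!![1, 0, 0; 0, 1, 1; 0, 0, 1], ⟨rfl, rfl, rfl, rfl, rfl, rfl⟩⟩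

/-- The generator of the center: the unitriangular matrix with a `1` in position `(1,3)`. -/
def Z : Heisenberg R := ⟨!![1, 0, 1; 0, 1, 0; 0, 0, 1], ⟨rfl, rfl, rfl, rfl, rfl, rfl⟩⟩

theorem Z_mem_center : (Z : Heisenberg R) ∈ Subgroup.center (Heisenberg R) := by
  rw [Subgroup.mem_center_iff]
  intro M
  obtain ⟨m1, m2, m3, m4, m5, m6⟩ := M.2
  apply Subtype.ext
  rw [mul_val, mul_val]
  ext i j
  fin_cases i <;> fin_cases j <;>
    simp [Z, Matrix.mul_apply, Fin.sum_univ_three, Matrix.vecHead, Matrix.vecTail,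
      m1, m2, m3, m4, m5, m6] <;> ring

end Heisenberg

open Heisenberg in
/-- The diagonal copy `Δ = {(Zᵏ, Zᵏ) : k ∈ ℤ}` of the common center in `H(ℤ) × H(ℤ)`. -/
def HeisDiag : Subgroup (Heisenberg ℤ × Heisenberg ℤ) := Subgroup.zpowers (Z, Z)

instance : HeisDiag.Normal := by
  have h1 : ∀ x : Heisenberg ℤ × Heisenberg ℤ, Commute x (Heisenberg.Z, Heisenberg.Z) := by
    intro x
    have hz := Subgroup.mem_center_iff.mp (Heisenberg.Z_mem_center (R := ℤ))
    exact Prod.ext (hz x.1) (hz x.2)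
  constructor
  intro n hn g
  obtain ⟨k, rfl⟩ := Subgroup.mem_zpowers_iff.mp hn
  rw [((h1 g).zpow_right k).eq, mul_assoc, mul_inv_cancel, mul_one]
  exact ⟨k, rfl⟩

/-- Generators `a`, `b`, `c`, `d` of `G''`. -/
def ga : FreeGroup (Fin 4) := FreeGroup.of 0
def gb : FreeGroup (Fin 4) := FreeGroup.of 1
def gc : FreeGroup (Fin 4) := FreeGroup.of 2
def gd : FreeGroup (Fin 4) := FreeGroup.of 3

open scoped commutatorElement in
/-- Relators of `G'' = ⟨a,b,c,d | ⁅a,c⁆, ⁅a,d⁆, ⁅b,c⁆, ⁅b,d⁆, ⁅a,b⁆·⁅c,d⁆⟩`. -/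
def G''rels : Set (FreeGroup (Fin 4)) :=
  {⁅ga, gc⁆, ⁅ga, gd⁆, ⁅gb, gc⁆, ⁅gb, gd⁆, ⁅ga, gb⁆ * ⁅gc, gd⁆}

/-!
Every element of `H(ℤ)` is `B ^ y * A ^ x * Z ^ z` with `Z = ⁅A, B⁆`. If `α, β` lie in a group
in which `ζ = ⁅α, β⁆` commutes with `α` and `β`, then `α ^ x * β ^ y = β ^ y * α ^ x * ζ ^ (x * y)`,
and this identity is exactly what makes `B ^ y * A ^ x * Z ^ z ↦ β ^ y * α ^ x * ζ ^ z` a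
homomorphism `H(ℤ) → G`. In `G''` the relators make `a, b` commute with `c, d`, so
`⁅a, b⁆ = ⁅c, d⁆⁻¹` commutes with all four generators: the two resulting homomorphisms
`H(ℤ) → G''` have commuting images, and their product sends `(Z, Z)` to `⁅a, b⁆ * ⁅c, d⁆ = 1`,
so it induces `(H(ℤ) × H(ℤ)) ⧸ Δ → G''`. It is inverse to the map `G'' → (H(ℤ) × H(ℤ)) ⧸ Δ` given by the
presentation, since both composites fix generators.
-/

open scoped commutatorElement

theorem Subgroup.commutatorElement_mem {G : Type*} [Group G] {H : Subgroup G} {x y : G}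
    (hx : x ∈ H) (hy : y ∈ H) : ⁅x, y⁆ ∈ H := by
  rw [commutatorElement_def]
  exact mul_mem (mul_mem (mul_mem hx hy) (inv_mem hx)) (inv_mem hy)

theorem zpow_eq_of_map_add {G : Type*} [Group G] (g : ℤ → G)
    (hg : ∀ m n, g (m + n) = g m * g n) (n : ℤ) : g 1 ^ n = g n := by
  simpa using (map_zpow (MonoidHom.mk' (g ∘ Multiplicative.toAdd) fun m n => hg m n)
    (Multiplicative.ofAdd 1) n).symm

theorem MonoidHom.prod_ext {M N P : Type*} [MulOneClass M] [MulOneClass N] [Monoid P]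
    {f g : M × N →* P} (hl : f.comp (inl M N) = g.comp (inl M N))
    (hr : f.comp (inr M N) = g.comp (inr M N)) : f = g := by
  ext ⟨m, n⟩
  rw [← Prod.fst_mul_snd (m, n), map_mul, map_mul]
  exact congr_arg₂ (· * ·) (DFunLike.congr_fun hl m) (DFunLike.congr_fun hr n)

theorem PresentedGroup.commute_of_commutatorElement_mem {α : Type*} {rels : Set (FreeGroup α)}
    {i j : α} (h : ⁅FreeGroup.of i, FreeGroup.of j⁆ ∈ rels) :
    Commute (PresentedGroup.of (rels := rels) i) (PresentedGroup.of j) := by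
  rw [← commutatorElement_eq_one_iff_commute]
  exact PresentedGroup.one_of_mem h

section CommutatorCentral

variable {G : Type*} [Group G] {α β : G}

theorem zpow_mul_zpow_of_commute_commutatorElement (hα : Commute ⁅α, β⁆ α)
    (hβ : Commute ⁅α, β⁆ β) (x y : ℤ) :
    α ^ x * β ^ y = β ^ y * α ^ x * ⁅α, β⁆ ^ (x * y) := by
  set ζ := ⁅α, β⁆
  have hαβ : α * β = ζ * β * α := by simp only [ζ, commutatorElement_def]; group
  have h₁ : SemiconjBy β (ζ * α) α := by
    rw [SemiconjBy, ← mul_assoc, ← hβ.eq, hαβ]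
  have h₂ : SemiconjBy (α ^ x) β (ζ ^ x * β) := by
    have := h₁.zpow_right x
    rw [SemiconjBy, hα.mul_zpow] at this
    rw [SemiconjBy, ← this, ← mul_assoc, (hβ.zpow_left x).eq]
  have := h₂.zpow_right y
  rw [SemiconjBy, (hβ.zpow_left x).mul_zpow, ← zpow_mul] at this
  rw [this, mul_assoc, ((hβ.zpow_zpow _ y).mul_right (hα.zpow_zpow _ x)).eq, mul_assoc]

theorem zpow_mul_zpow_mul_commutatorElement_zpow_mul (hα : Commute ⁅α, β⁆ α)
    (hβ : Commute ⁅α, β⁆ β) (x₁ y₁ z₁ x₂ y₂ z₂ : ℤ) :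
    β ^ y₁ * α ^ x₁ * ⁅α, β⁆ ^ z₁ * (β ^ y₂ * α ^ x₂ * ⁅α, β⁆ ^ z₂) =
      β ^ (y₁ + y₂) * α ^ (x₁ + x₂) * ⁅α, β⁆ ^ (z₁ + z₂ + x₁ * y₂) := by
  have hswap := zpow_mul_zpow_of_commute_commutatorElement hα hβ x₁ y₂
  set ζ := ⁅α, β⁆
  clear_value ζ
  calc β ^ y₁ * α ^ x₁ * ζ ^ z₁ * (β ^ y₂ * α ^ x₂ * ζ ^ z₂)
      = β ^ y₁ * α ^ x₁ * (ζ ^ z₁ * (β ^ y₂ * α ^ x₂)) * ζ ^ z₂ := by group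
    _ = β ^ y₁ * (α ^ x₁ * β ^ y₂) * α ^ x₂ * ζ ^ z₁ * ζ ^ z₂ := by
        rw [((hβ.zpow_zpow z₁ y₂).mul_right (hα.zpow_zpow z₁ x₂)).eq]; group
    _ = β ^ y₁ * β ^ y₂ * α ^ x₁ * (ζ ^ (x₁ * y₂) * α ^ x₂) * ζ ^ z₁ * ζ ^ z₂ := by
        rw [hswap]; group
    _ = β ^ (y₁ + y₂) * α ^ (x₁ + x₂) * ζ ^ (z₁ + z₂ + x₁ * y₂) := by
        rw [(hα.zpow_zpow _ x₂).eq]; group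

end CommutatorCentral

namespace Heisenberg

section Coordinates

variable {R : Type} [CommRing R]

def mk (x y z : R) : Heisenberg R :=
  ⟨!![1, x, z; 0, 1, y; 0, 0, 1], ⟨rfl, rfl, rfl, rfl, rfl, rfl⟩⟩

theorem mk_mul_mk (x₁ y₁ z₁ x₂ y₂ z₂ : R) :
    mk x₁ y₁ z₁ * mk x₂ y₂ z₂ = mk (x₁ + x₂) (y₁ + y₂) (z₁ + z₂ + x₁ * y₂) := by
  apply Subtype.ext
  rw [mul_val]
  ext i j
  fin_cases i <;> fin_cases j <;> simp [mk, Matrix.mul_apply, Fin.sum_univ_three] <;> ring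

theorem exists_eq_mk (M : Heisenberg R) : ∃ x y z, M = mk x y z := by
  obtain ⟨m₀₀, m₁₁, m₂₂, m₁₀, m₂₀, m₂₁⟩ := M.2
  refine ⟨M.1 0 1, M.1 1 2, M.1 0 2, Subtype.ext ?_⟩
  ext i j
  fin_cases i <;> fin_cases j <;> simp [mk, m₀₀, m₁₁, m₂₂, m₁₀, m₂₀, m₂₁]

theorem A_eq_mk : (A : Heisenberg R) = mk 1 0 0 := rfl
theorem B_eq_mk : (B : Heisenberg R) = mk 0 1 0 := rfl
theorem Z_eq_mk : (Z : Heisenberg R) = mk 0 0 1 := rfl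

theorem A_zpow (n : ℤ) : (A : Heisenberg R) ^ n = mk (n : R) 0 0 := by
  simpa [A_eq_mk] using
    zpow_eq_of_map_add (fun n : ℤ => mk (n : R) 0 0) (fun m n => by simp [mk_mul_mk]) n

theorem B_zpow (n : ℤ) : (B : Heisenberg R) ^ n = mk 0 (n : R) 0 := by
  simpa [B_eq_mk] using
    zpow_eq_of_map_add (fun n : ℤ => mk 0 (n : R) 0) (fun m n => by simp [mk_mul_mk]) n

theorem Z_zpow (n : ℤ) : (Z : Heisenberg R) ^ n = mk 0 0 (n : R) := by
  simpa [Z_eq_mk] using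
    zpow_eq_of_map_add (fun n : ℤ => mk 0 0 (n : R)) (fun m n => by simp [mk_mul_mk]) n

theorem commutatorElement_A_B : ⁅(A : Heisenberg R), (B : Heisenberg R)⁆ = Z := by
  have h : (A : Heisenberg R) * B = Z * B * A := by
    simp only [A_eq_mk, B_eq_mk, Z_eq_mk, mk_mul_mk]; norm_num
  rw [commutatorElement_def, h]
  group

end Coordinates

theorem mk_eq_B_zpow_mul_A_zpow_mul_Z_zpow (x y z : ℤ) : mk x y z = B ^ y * A ^ x * Z ^ z := by
  simp [A_zpow, B_zpow, Z_zpow, mk_mul_mk]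

theorem closure_A_B : Subgroup.closure {(A : Heisenberg ℤ), B} = ⊤ := by
  set S := Subgroup.closure {(A : Heisenberg ℤ), B}
  have hA : A ∈ S := Subgroup.subset_closure (by simp)
  have hB : B ∈ S := Subgroup.subset_closure (by simp)
  have hZ : Z ∈ S := commutatorElement_A_B (R := ℤ) ▸ Subgroup.commutatorElement_mem hA hB
  refine eq_top_iff.mpr fun M _ => ?_
  obtain ⟨x, y, z, rfl⟩ := exists_eq_mk M
  rw [mk_eq_B_zpow_mul_A_zpow_mul_Z_zpow]
  exact mul_mem (mul_mem (zpow_mem hB y) (zpow_mem hA x)) (zpow_mem hZ z)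

variable {G : Type*} [Group G]

theorem hom_ext {f g : Heisenberg ℤ →* G} (hA : f A = g A) (hB : f B = g B) : f = g :=
  MonoidHom.eq_of_eqOn_dense closure_A_B (by simp [Set.EqOn, hA, hB])

def lift (α β : G) (hα : Commute ⁅α, β⁆ α) (hβ : Commute ⁅α, β⁆ β) : Heisenberg ℤ →* G :=
  MonoidHom.mk' (fun M => β ^ M.1 1 2 * α ^ M.1 0 1 * ⁅α, β⁆ ^ M.1 0 2) fun M N => by
    obtain ⟨x₁, y₁, z₁, rfl⟩ := exists_eq_mk M
    obtain ⟨x₂, y₂, z₂, rfl⟩ := exists_eq_mk N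
    rw [mk_mul_mk]
    exact (zpow_mul_zpow_mul_commutatorElement_zpow_mul hα hβ x₁ y₁ z₁ x₂ y₂ z₂).symm

variable {α β : G} (hα : Commute ⁅α, β⁆ α) (hβ : Commute ⁅α, β⁆ β)

@[simp] theorem lift_A : lift α β hα hβ A = α := by simp [lift, A]

@[simp] theorem lift_B : lift α β hα hβ B = β := by simp [lift, B]

@[simp] theorem lift_Z : lift α β hα hβ Z = ⁅α, β⁆ := by simp [lift, Z]

theorem range_lift : (lift α β hα hβ).range = Subgroup.closure {α, β} := by
  rw [MonoidHom.range_eq_map, ← closure_A_B, MonoidHom.map_closure, Set.image_pair, lift_A,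
    lift_B]

theorem lift_mem_closure (M : Heisenberg ℤ) : lift α β hα hβ M ∈ Subgroup.closure {α, β} :=
  range_lift hα hβ ▸ ⟨M, rfl⟩

end Heisenberg

section CommutingPairs

open Subgroup

variable {P : Type*} [Group P] {a b c d : P}

theorem closure_pair_le_centralizer_closure_pair (hac : Commute a c) (had : Commute a d)
    (hbc : Commute b c) (hbd : Commute b d) :
    closure {c, d} ≤ centralizer (closure {a, b} : Set P) := by
  rw [centralizer_closure, closure_le]
  simp only [Set.insert_subset_iff, Set.singleton_subset_iff, SetLike.mem_coe,
    mem_centralizer_iff, Set.mem_insert_iff, Set.mem_singleton_iff, forall_eq_or_imp, forall_eq]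
  exact ⟨⟨hac.eq, hbc.eq⟩, had.eq, hbd.eq⟩

theorem commute_of_mem_closure_of_mem_closure
    (hcomm : closure {c, d} ≤ centralizer (closure {a, b} : Set P)) {x y : P}
    (hx : x ∈ closure {a, b}) (hy : y ∈ closure {c, d}) : Commute x y :=
  mem_centralizer_iff.mp (hcomm hy) x hx

theorem commute_commutatorElement_of_mem_closure_left
    (hcomm : closure {c, d} ≤ centralizer (closure {a, b} : Set P)) (habcd : ⁅a, b⁆ * ⁅c, d⁆ = 1)
    {x : P} (hx : x ∈ closure {a, b}) : Commute ⁅a, b⁆ x := by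
  rw [eq_inv_of_mul_eq_one_left habcd]
  exact (commute_of_mem_closure_of_mem_closure hcomm hx
    (commutatorElement_mem (subset_closure (by simp)) (subset_closure (by simp)))).symm.inv_left

theorem commute_commutatorElement_of_mem_closure_right
    (hcomm : closure {c, d} ≤ centralizer (closure {a, b} : Set P)) (habcd : ⁅a, b⁆ * ⁅c, d⁆ = 1)
    {x : P} (hx : x ∈ closure {c, d}) : Commute ⁅c, d⁆ x := by
  rw [eq_inv_of_mul_eq_one_right habcd]
  exact (commute_of_mem_closure_of_mem_closure hcomm
    (commutatorElement_mem (subset_closure (by simp)) (subset_closure (by simp))) hx).inv_left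

variable (hcomm : closure {c, d} ≤ centralizer (closure {a, b} : Set P))
  (habcd : ⁅a, b⁆ * ⁅c, d⁆ = 1)

def Heisenberg.liftProd : Heisenberg ℤ × Heisenberg ℤ →* P :=
  MonoidHom.noncommCoprod
    (Heisenberg.lift a b
      (commute_commutatorElement_of_mem_closure_left hcomm habcd (subset_closure (by simp)))
      (commute_commutatorElement_of_mem_closure_left hcomm habcd (subset_closure (by simp))))
    (Heisenberg.lift c d
      (commute_commutatorElement_of_mem_closure_right hcomm habcd (subset_closure (by simp)))
      (commute_commutatorElement_of_mem_closure_right hcomm habcd (subset_closure (by simp))))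
    fun M N => commute_of_mem_closure_of_mem_closure hcomm (Heisenberg.lift_mem_closure _ _ M)
      (Heisenberg.lift_mem_closure _ _ N)

namespace HeisDiag

open Heisenberg (A B Z)

def mkInl : Heisenberg ℤ →* (Heisenberg ℤ × Heisenberg ℤ) ⧸ HeisDiag :=
  (QuotientGroup.mk' HeisDiag).comp (MonoidHom.inl _ _)

def mkInr : Heisenberg ℤ →* (Heisenberg ℤ × Heisenberg ℤ) ⧸ HeisDiag :=
  (QuotientGroup.mk' HeisDiag).comp (MonoidHom.inr _ _)

theorem commute_mkInl_mkInr (M N : Heisenberg ℤ) : Commute (mkInl M) (mkInr N) :=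
  (MonoidHom.commute_inl_inr M N).map (QuotientGroup.mk' HeisDiag)

theorem mkInl_Z_mul_mkInr_Z : mkInl Z * mkInr Z = 1 := by
  rw [mkInl, mkInr, MonoidHom.comp_apply, MonoidHom.comp_apply, ← map_mul, MonoidHom.inl_apply,
    MonoidHom.inr_apply, Prod.mk_mul_mk, mul_one, one_mul, QuotientGroup.mk'_apply,
    QuotientGroup.eq_one_iff]
  exact mem_zpowers _

theorem hom_ext {f g : (Heisenberg ℤ × Heisenberg ℤ) ⧸ HeisDiag →* P}
    (hA₁ : f (mkInl A) = g (mkInl A)) (hB₁ : f (mkInl B) = g (mkInl B))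
    (hA₂ : f (mkInr A) = g (mkInr A)) (hB₂ : f (mkInr B) = g (mkInr B)) : f = g :=
  QuotientGroup.monoidHom_ext _ <|
    MonoidHom.prod_ext (Heisenberg.hom_ext hA₁ hB₁) (Heisenberg.hom_ext hA₂ hB₂)

def lift : (Heisenberg ℤ × Heisenberg ℤ) ⧸ HeisDiag →* P :=
  QuotientGroup.lift HeisDiag (Heisenberg.liftProd hcomm habcd) <| by
    simpa [HeisDiag, Heisenberg.liftProd] using habcd

@[simp] theorem lift_mkInl_A : lift hcomm habcd (mkInl A) = a := by
  simp [lift, mkInl, Heisenberg.liftProd]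

@[simp] theorem lift_mkInl_B : lift hcomm habcd (mkInl B) = b := by
  simp [lift, mkInl, Heisenberg.liftProd]

@[simp] theorem lift_mkInr_A : lift hcomm habcd (mkInr A) = c := by
  simp [lift, mkInr, Heisenberg.liftProd]

@[simp] theorem lift_mkInr_B : lift hcomm habcd (mkInr B) = d := by
  simp [lift, mkInr, Heisenberg.liftProd]

end HeisDiag

end CommutingPairs

namespace G''

open Heisenberg (A B Z)
open HeisDiag PresentedGroup

theorem commutatorElement_mul_commutatorElement :
    ⁅(of 0 : PresentedGroup G''rels), (of 1 : PresentedGroup G''rels)⁆ *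
      ⁅(of 2 : PresentedGroup G''rels), (of 3 : PresentedGroup G''rels)⁆ = 1 :=
  one_of_mem (x := ⁅ga, gb⁆ * ⁅gc, gd⁆) (by simp [G''rels])

theorem closure_cd_le_centralizer :
    Subgroup.closure {(of 2 : PresentedGroup G''rels), of 3} ≤
      Subgroup.centralizer (Subgroup.closure {(of 0 : PresentedGroup G''rels), of 1} : Set _) :=
  closure_pair_le_centralizer_closure_pair
    (commute_of_commutatorElement_mem (by simp [G''rels, ga, gc]))
    (commute_of_commutatorElement_mem (by simp [G''rels, ga, gd]))
    (commute_of_commutatorElement_mem (by simp [G''rels, gb, gc]))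
    (commute_of_commutatorElement_mem (by simp [G''rels, gb, gd]))

theorem lift_eq_one_of_mem_rels :
    ∀ r ∈ G''rels, FreeGroup.lift ![mkInl A, mkInl B, mkInr A, mkInr B] r = 1 := by
  have hcomm (M N : Heisenberg ℤ) : ⁅mkInl M, mkInr N⁆ = 1 :=
    commutatorElement_eq_one_iff_commute.mpr (commute_mkInl_mkInr M N)
  have hZ : ⁅mkInl A, mkInl B⁆ * ⁅mkInr A, mkInr B⁆ = 1 := by
    rw [← map_commutatorElement, ← map_commutatorElement, Heisenberg.commutatorElement_A_B]
    exact mkInl_Z_mul_mkInr_Z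
  rintro r (rfl | rfl | rfl | rfl | rfl) <;> simp [ga, gb, gc, gd, hcomm, hZ]

def toQuotient : PresentedGroup G''rels →* (Heisenberg ℤ × Heisenberg ℤ) ⧸ HeisDiag :=
  toGroup lift_eq_one_of_mem_rels

def ofQuotient : (Heisenberg ℤ × Heisenberg ℤ) ⧸ HeisDiag →* PresentedGroup G''rels :=
  HeisDiag.lift closure_cd_le_centralizer commutatorElement_mul_commutatorElement

theorem ofQuotient_comp_toQuotient : ofQuotient.comp toQuotient = MonoidHom.id _ := by
  ext i
  fin_cases i <;> simp [ofQuotient, toQuotient]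

theorem toQuotient_comp_ofQuotient : toQuotient.comp ofQuotient = MonoidHom.id _ :=
  HeisDiag.hom_ext (by simp [ofQuotient, toQuotient]) (by simp [ofQuotient, toQuotient])
    (by simp [ofQuotient, toQuotient]) (by simp [ofQuotient, toQuotient])

end G''

open Heisenberg in
/-- `G''` is isomorphic to the quotient of `H(ℤ) × H(ℤ)` by the diagonal copy `Δ` of the
common center, via `a ↦ (A,1)`, `b ↦ (B,1)`, `c ↦ (1,A)`, `d ↦ (1,B)`. -/
theorem G''_iso_heisenberg_square_quotient :
    ∃ e : PresentedGroup G''rels ≃* (Heisenberg ℤ × Heisenberg ℤ) ⧸ HeisDiag,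
      e (PresentedGroup.of 0) = QuotientGroup.mk (A, 1) ∧
      e (PresentedGroup.of 1) = QuotientGroup.mk (B, 1) ∧
      e (PresentedGroup.of 2) = QuotientGroup.mk (1, A) ∧
      e (PresentedGroup.of 3) = QuotientGroup.mk (1, B) :=
  ⟨MonoidHom.toMulEquiv _ _ G''.ofQuotient_comp_toQuotient G''.toQuotient_comp_ofQuotient,
    PresentedGroup.toGroup.of (x := 0) G''.lift_eq_one_of_mem_rels,
    PresentedGroup.toGroup.of (x := 1) G''.lift_eq_one_of_mem_rels,
    PresentedGroup.toGroup.of (x := 2) G''.lift_eq_one_of_mem_rels,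
    PresentedGroup.toGroup.of (x := 3) G''.lift_eq_one_of_mem_rels⟩
end

section
/- Let G' be the group with generators a, b, c, d, e and relations a⁻¹ca = c, a⁻¹ea = e, a⁻¹da = c⁻¹dce, b⁻¹db = d, b⁻¹eb = e, b⁻¹cb = d⁻¹cde⁻¹. Then the assignments c ↦ c, e ↦ e, d ↦ c⁻¹dce (for a) and c ↦ d⁻¹cde⁻¹, d ↦ d, e ↦ e (for b) extend to automorphisms of the free group F₃ on c, d, e, determine an action θ of the free group F₂ on a, b on F₃ by automorphisms (with θ(a)⁻¹ and θ(b)⁻¹ being the above automorphisms), and G' is isomorphic to the semidirect product F₃ ⋊_θ F₂. -/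
/-- Generators `a`, `b`, `c`, `d`, `e` of `G'` as elements of the free group on five
letters (`a = 0`, `b = 1`, `c = 2`, `d = 3`, `e = 4`). -/
def wa : FreeGroup (Fin 5) := FreeGroup.of 0
def wb : FreeGroup (Fin 5) := FreeGroup.of 1
def wc : FreeGroup (Fin 5) := FreeGroup.of 2
def wd : FreeGroup (Fin 5) := FreeGroup.of 3
def we : FreeGroup (Fin 5) := FreeGroup.of 4

/-- Relators of `G' = ⟨a,b,c,d,e | a⁻¹ca = c, a⁻¹ea = e, a⁻¹da = c⁻¹dce,
b⁻¹db = d, b⁻¹eb = e, b⁻¹cb = d⁻¹cde⁻¹⟩`. -/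
def G'rels : Set (FreeGroup (Fin 5)) :=
  {wa⁻¹ * wc * wa * wc⁻¹,
   wa⁻¹ * we * wa * we⁻¹,
   wa⁻¹ * wd * wa * (wc⁻¹ * wd * wc * we)⁻¹,
   wb⁻¹ * wd * wb * wd⁻¹,
   wb⁻¹ * we * wb * we⁻¹,
   wb⁻¹ * wc * wb * (wd⁻¹ * wc * wd * we⁻¹)⁻¹}

/-! When `N = F(ι)` and `H = F(κ)` are free, `N ⋊[θ] H` is presented by the generators `ι ⊕ κ`
and the relations `k⁻¹ i k = θ(k)⁻¹ i`. These relations hold in `N ⋊[θ] H`; conversely they say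
that in the presented group conjugation by each generator `k` acts on the image of `N` as `θ(k)⁻¹`,
and since the elements of `H` along which the map from `N` is equivariant form a subgroup, this is
the compatibility needed to map `N ⋊[θ] H` back. The six relations of `G'` are exactly this
presentation for `θ(a) = φa⁻¹`, `θ(b) = φb⁻¹` once `a, b` are sent to `F₂` and `c, d, e` to `F₃`. -/

section Equivariance

variable {N G H : Type*} [Group N] [Group G] [Group H]

def equivarianceSubgroup (α : H →* MulAut N) (β : H →* MulAut G) (f : N →* G) : Subgroup H where
  carrier := {h | ∀ n, f (α h n) = β h (f n)}
  one_mem' := by simp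
  mul_mem' {g h} hg hh n := by
    rw [map_mul, map_mul, MulAut.mul_apply, MulAut.mul_apply, hg, hh]
  inv_mem' {h} hh n := by
    rw [map_inv, map_inv, MulAut.inv_apply, MulAut.inv_apply,
      MulEquiv.eq_symm_apply, ← hh, MulEquiv.apply_symm_apply]

theorem equivarianceSubgroup_eq_top_of_free {κ : Type*}
    (α : FreeGroup κ →* MulAut N) (β : FreeGroup κ →* MulAut G) (f : N →* G)
    (h : ∀ k n, f ((α (.of k))⁻¹ n) = (β (.of k))⁻¹ (f n)) :
    equivarianceSubgroup α β f = ⊤ := by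
  rw [eq_top_iff, ← FreeGroup.closure_range_of, Subgroup.closure_le]
  rintro _ ⟨k, rfl⟩
  refine inv_mem_iff.mp fun n => ?_
  rw [map_inv, map_inv, h]

end Equivariance

namespace FreeGroup

variable {ι κ : Type*} (θ : FreeGroup κ →* MulAut (FreeGroup ι))

def semidirectProductRels : Set (FreeGroup (ι ⊕ κ)) :=
  Set.range fun p : κ × ι => (of (.inr p.1))⁻¹ * of (.inl p.2) * of (.inr p.1) *
    (map Sum.inl ((θ (of p.1))⁻¹ (of p.2)))⁻¹

open SemidirectProduct in
def semidirectProductOf : ι ⊕ κ → FreeGroup ι ⋊[θ] FreeGroup κ := Sum.elim (inl ∘ of) (inr ∘ of)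

theorem lift_semidirectProductOf_comp_map_inl :
    (lift (semidirectProductOf θ)).comp (map Sum.inl) = SemidirectProduct.inl :=
  ext_hom _ _ fun _ => by simp [semidirectProductOf]

open SemidirectProduct in
def toSemidirectProduct :
    PresentedGroup (semidirectProductRels θ) →* FreeGroup ι ⋊[θ] FreeGroup κ :=
  PresentedGroup.toGroup (f := semidirectProductOf θ) <| by
    rintro _ ⟨⟨k, i⟩, rfl⟩
    rw [_root_.map_mul, _root_.map_inv, mul_inv_eq_one, ← MonoidHom.comp_apply,
      lift_semidirectProductOf_comp_map_inl, inl_aut_inv]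
    simp [semidirectProductOf]

theorem toSemidirectProduct_mk (w : FreeGroup (ι ⊕ κ)) :
    toSemidirectProduct θ (PresentedGroup.mk _ w) = lift (semidirectProductOf θ) w :=
  rfl

theorem mk_semidirectProductRels_conj (k : κ) (i : ι) :
    PresentedGroup.mk (semidirectProductRels θ) ((of (.inr k))⁻¹ * of (.inl i) * of (.inr k)) =
      PresentedGroup.mk _ (map Sum.inl ((θ (of k))⁻¹ (of i))) :=
  PresentedGroup.mk_eq_mk_of_mul_inv_mem (Set.mem_range_self (k, i))

def ofSemidirectProduct :
    FreeGroup ι ⋊[θ] FreeGroup κ →* PresentedGroup (semidirectProductRels θ) :=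
  let fι := (PresentedGroup.mk (semidirectProductRels θ)).comp (map Sum.inl)
  let fκ := (PresentedGroup.mk (semidirectProductRels θ)).comp (map Sum.inr)
  SemidirectProduct.lift fι fκ fun g => by
    have hgen (k : κ) : fι.comp ((θ (of k))⁻¹).toMonoidHom =
        ((MulAut.conj (fκ (of k)))⁻¹).toMonoidHom.comp fι :=
      ext_hom _ _ fun i => by simpa [fι, fκ] using (mk_semidirectProductRels_conj θ k i).symm
    have hg : g ∈ equivarianceSubgroup θ (MulAut.conj.comp fκ) fι := by
      rw [equivarianceSubgroup_eq_top_of_free θ (MulAut.conj.comp fκ) fι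
        fun k => DFunLike.congr_fun (hgen k)]
      exact Subgroup.mem_top g
    ext n
    exact hg (of n)

def presentedGroupEquivSemidirectProduct :
    PresentedGroup (semidirectProductRels θ) ≃* FreeGroup ι ⋊[θ] FreeGroup κ :=
  MonoidHom.toMulEquiv (toSemidirectProduct θ) (ofSemidirectProduct θ)
    (PresentedGroup.ext fun x => by
      cases x <;>
        simp [PresentedGroup.of, toSemidirectProduct_mk, ofSemidirectProduct, semidirectProductOf])
    (SemidirectProduct.hom_ext
      (ext_hom _ _ fun _ => by
        simp [toSemidirectProduct_mk, ofSemidirectProduct, semidirectProductOf])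
      (ext_hom _ _ fun _ => by
        simp [toSemidirectProduct_mk, ofSemidirectProduct, semidirectProductOf]))

end FreeGroup

namespace G'

open FreeGroup

def φa : MulAut (FreeGroup (Fin 3)) :=
  MonoidHom.toMulEquiv (lift ![of 0, (of 0)⁻¹ * of 1 * of 0 * of 2, of 2])
    (lift ![of 0, of 0 * of 1 * (of 2)⁻¹ * (of 0)⁻¹, of 2])
    (ext_hom _ _ fun i => by fin_cases i <;> simp [mul_assoc])
    (ext_hom _ _ fun i => by fin_cases i <;> simp [mul_assoc])

def φb : MulAut (FreeGroup (Fin 3)) :=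
  MonoidHom.toMulEquiv (lift ![(of 1)⁻¹ * of 0 * of 1 * (of 2)⁻¹, of 1, of 2])
    (lift ![of 1 * of 0 * of 2 * (of 1)⁻¹, of 1, of 2])
    (ext_hom _ _ fun i => by fin_cases i <;> simp [mul_assoc])
    (ext_hom _ _ fun i => by fin_cases i <;> simp [mul_assoc])

def θ : FreeGroup (Fin 2) →* MulAut (FreeGroup (Fin 3)) := lift ![φa⁻¹, φb⁻¹]

def generatorEquiv : Fin 5 ≃ Fin 3 ⊕ Fin 2 where
  toFun := ![.inr 0, .inr 1, .inl 0, .inl 1, .inl 2]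
  invFun := Sum.elim ![2, 3, 4] ![0, 1]
  left_inv := by decide
  right_inv := by decide

theorem image_G'rels : freeGroupCongr generatorEquiv '' G'rels = semidirectProductRels θ := by
  ext r
  simp only [G'rels, wa, wb, wc, wd, we, semidirectProductRels, θ, φa, φb, generatorEquiv,
    freeGroupCongr_apply, Equiv.coe_fn_mk, Set.mem_image, Set.mem_insert_iff, Set.mem_singleton_iff,
    Set.mem_range, exists_eq_or_imp, ↓existsAndEq, true_and, Prod.exists, Fin.exists_fin_succ,
    IsEmpty.exists_iff, or_false, Fin.isValue, Fin.succ_zero_eq_one, Fin.succ_one_eq_two,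
    Matrix.cons_val_zero, Matrix.cons_val, Matrix.cons_val_one, Matrix.cons_val_succ,
    Matrix.cons_val_fin_one, _root_.map_mul, _root_.map_inv, map.of, lift_apply_of, mul_inv_rev,
    inv_inv, MulAut.inv_apply, MulAut.inv_symm, MonoidHom.toMulEquiv_apply]
  tauto

end G'

open G' in
/-- `G'` is a semidirect product `F₃ ⋊_θ F₂`: the assignments `c ↦ c, d ↦ c⁻¹dce, e ↦ e`
and `c ↦ d⁻¹cde⁻¹, d ↦ d, e ↦ e` extend to automorphisms `φa`, `φb` of the free group `F₃`
on `c = 0`, `d = 1`, `e = 2`; they determine an action `θ` of the free group `F₂` on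
`a = 0`, `b = 1` by automorphisms of `F₃`, with `θ(a)⁻¹ = φa` and `θ(b)⁻¹ = φb`, and `G'`
is isomorphic to `F₃ ⋊[θ] F₂`. -/
theorem G'_iso_semidirectProduct :
    ∃ φa φb : MulAut (FreeGroup (Fin 3)),
      φa (FreeGroup.of 0) = FreeGroup.of 0 ∧
      φa (FreeGroup.of 1) =
        (FreeGroup.of 0)⁻¹ * FreeGroup.of 1 * FreeGroup.of 0 * FreeGroup.of 2 ∧
      φa (FreeGroup.of 2) = FreeGroup.of 2 ∧
      φb (FreeGroup.of 0) =
        (FreeGroup.of 1)⁻¹ * FreeGroup.of 0 * FreeGroup.of 1 * (FreeGroup.of 2)⁻¹ ∧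
      φb (FreeGroup.of 1) = FreeGroup.of 1 ∧
      φb (FreeGroup.of 2) = FreeGroup.of 2 ∧
      ∃ θ : FreeGroup (Fin 2) →* MulAut (FreeGroup (Fin 3)),
        θ (FreeGroup.of 0) = φa⁻¹ ∧ θ (FreeGroup.of 1) = φb⁻¹ ∧
        Nonempty (PresentedGroup G'rels ≃* FreeGroup (Fin 3) ⋊[θ] FreeGroup (Fin 2)) := by
  refine ⟨φa, φb, ?_, ?_, ?_, ?_, ?_, ?_, θ, ?_, ?_, ⟨?_⟩⟩
  any_goals simp [φa, φb, θ]
  have e := FreeGroup.presentedGroupEquivSemidirectProduct θ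
  rw [← image_G'rels] at e
  exact (PresentedGroup.equivPresentedGroup G'rels generatorEquiv).trans e
end
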